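/- arXiv:2102.05475 — 3 statements merged into one kernel-verified Lean document; each statement's English description precedes it below -/
import Mathlib

section
/- There exists a universal constant C > 0 such that the following holds. For every ε ∈ (0, 1/32) and every process on I_ε whose initial configuration satisfies Σ_{i ∈ I_ε} p_i^1 = 1, for t = ⌈C · B_ε³⌉ one has Σ_{i ∈ I_ε⁺} p_i^t ≤ 64 · ε · B_ε³. -/
/-- `B_ε := 2⌈log₂(1/ε)⌉ + 1`. -/
noncomputable def Bval (ε : ℝ) : ℤ := 2 * ⌈Real.logb 2 (1 / ε)⌉ + 1

/-- `I_ε`: the odd integers `i` with `-B_ε ≤ i ≤ B_ε`. -/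
noncomputable def Iset (ε : ℝ) : Finset ℤ :=
  (Finset.Icc (-(Bval ε)) (Bval ε)).filter (fun i => Odd i)

/-- `I_ε⁺ := I_ε ∩ {i > 0}`. -/
noncomputable def Ipos (ε : ℝ) : Finset ℤ := (Iset ε).filter (fun i => 0 < i)

/-- `I_ε⁻ := I_ε ∩ {i < 0}`. -/
noncomputable def Ineg (ε : ℝ) : Finset ℤ := (Iset ε).filter (fun i => i < 0)

/-- A process on `I_ε` (Definition 4 of the paper): at each step `t ≥ 1` and each `i ∈ I_ε`,
an amount `q t i` with `0 ≤ q t i ≤ p t i` of the weight `p t i` moves to position `i - 2`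
and the remaining `p t i - q t i` moves to position `i + 2`, clamped to stay in `[-B_ε, B_ε]`;
`p (t+1) i` is the total weight arriving at `i`.  Moreover:
(i) at every step at least `15/16` of the mass on `I_ε⁺` moves down, and
(ii) for every `i ∈ I_ε⁻` whose mass is at least `(1/B_ε⁴) Σ_{j ∈ I_ε⁺} p t j`,
at most `1/16` of the weight at `i` moves up. -/
structure MProcess (ε : ℝ) where
  p : ℕ → ℤ → ℝ
  q : ℕ → ℤ → ℝ
  q_nonneg : ∀ t i, 0 ≤ q t i
  q_le_p : ∀ t i, q t i ≤ p t i
  update : ∀ t, 1 ≤ t → ∀ i ∈ Iset ε,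
    p (t + 1) i =
      (∑ j ∈ (Iset ε).filter (fun j => max (j - 2) (-(Bval ε)) = i), q t j) +
      (∑ j ∈ (Iset ε).filter (fun j => min (j + 2) (Bval ε) = i), (p t j - q t j))
  mass_down : ∀ t, 1 ≤ t →
    (15 / 16 : ℝ) * ∑ i ∈ Ipos ε, p t i ≤ ∑ i ∈ Ipos ε, q t i
  up_small : ∀ t, 1 ≤ t → ∀ i ∈ Ineg ε,
    (1 / (Bval ε : ℝ) ^ 4) * (∑ j ∈ Ipos ε, p t j) ≤ p t i →
    p t i - q t i ≤ (1 / 16 : ℝ) * p t i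

/-- `W_t := Σ_{i ∈ I_ε⁻} 2^i p_i^t + Σ_{i ∈ I_ε⁺} p_i^t`. -/
noncomputable def Wfun (ε : ℝ) (P : MProcess ε) (t : ℕ) : ℝ :=
  (∑ i ∈ Ineg ε, (2 : ℝ) ^ i * P.p t i) + ∑ i ∈ Ipos ε, P.p t i

/-!
The proof runs a potential argument. Put `Ψ_t = Σ_{i<0} 2^i p_i^t + Σ_{i>0} (1 + i/(2B)) p_i^t`,
where `B = B_ε`. Writing `S_t` for the mass on `I_ε⁺`, one step of the process changes `Ψ` as
follows. On the positive side at least `15/16` of the mass moves down, and every move changes the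
linear weight by `1/B`, so this part of `Ψ` drops by at least `(7/8) S_t / B`. At a negative site
holding mass at least `S_t / B⁴`, at most `1/16` of the mass moves up, so its `2^i`-weighted
contribution at least halves, up to a `2^{-B}` spill at the floor `-B`. The remaining negative
sites hold at most `S_t / B⁴` each, hence at most `O(S_t / B³)` in total. Together these give
`Ψ_{t+1} ≤ (1 - 1/(3B)) Ψ_t + 2^{-B}`. After `B³` steps `Ψ` is `O(B 2^{-B}) = O(B ε)`, and
`S_t ≤ Ψ_t`.
-/

open Finset

lemma Bval_odd (ε : ℝ) : Odd (Bval ε) := odd_two_mul_add_one _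

lemma two_mul_add_three_le_Bval {ε : ℝ} (hε : 0 < ε) {k : ℕ} (hk : (2 : ℝ) ^ k < 1 / ε) :
    2 * (k : ℤ) + 3 ≤ Bval ε := by
  have hlog : ((k : ℤ) : ℝ) < Real.logb 2 (1 / ε) := by
    rw [Real.lt_logb_iff_rpow_lt one_lt_two (by positivity)]
    exact_mod_cast hk
  have := Int.lt_ceil.mpr hlog
  unfold Bval
  omega

lemma two_zpow_neg_Bval_le {ε : ℝ} (hε : 0 < ε) (hε1 : ε < 1) :
    (2 : ℝ) ^ (-Bval ε) ≤ ε := by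
  have hL : 0 < ⌈Real.logb 2 (1 / ε)⌉ :=
    Int.ceil_pos.mpr (Real.logb_pos one_lt_two (by rw [lt_div_iff₀ hε]; linarith))
  have hinv : 1 / ε ≤ (2 : ℝ) ^ Bval ε := calc
    1 / ε = (2 : ℝ) ^ Real.logb 2 (1 / ε) :=
        (Real.rpow_logb two_pos (by norm_num) (by positivity)).symm
    _ ≤ (2 : ℝ) ^ (⌈Real.logb 2 (1 / ε)⌉ : ℝ) :=
        Real.rpow_le_rpow_of_exponent_le one_le_two (Int.le_ceil _)
    _ = (2 : ℝ) ^ ⌈Real.logb 2 (1 / ε)⌉ := Real.rpow_intCast _ _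
    _ ≤ (2 : ℝ) ^ Bval ε := zpow_le_zpow_right₀ one_le_two (by unfold Bval; omega)
  rw [zpow_neg, ← one_div, div_le_iff₀ (by positivity)]
  rwa [div_le_iff₀ hε, mul_comm] at hinv

lemma one_sub_inv_pow_le_half {m : ℕ} (hm : 1 ≤ m) : (1 - 1 / (m : ℝ)) ^ m ≤ 1 / 2 :=
  (Real.one_sub_div_pow_le_exp_neg (by exact_mod_cast hm)).trans Real.exp_neg_one_lt_half.le

lemma one_sub_inv_three_mul_pow_le {n : ℕ} (hn : 4 ≤ n) :
    (1 - 1 / (3 * n : ℝ)) ^ (n ^ 3 - 1) ≤ (1 / 2) ^ n := by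
  have hr : 1 / (3 * n : ℝ) ≤ 1 := by
    rw [div_le_one (by positivity)]
    have : (4 : ℝ) ≤ n := by exact_mod_cast hn
    linarith
  have hr0 : 0 ≤ 1 - 1 / (3 * n : ℝ) := sub_nonneg.mpr hr
  have hexp : 3 * n * n ≤ n ^ 3 - 1 := by
    have : 3 * n * n + 1 ≤ n ^ 3 := by nlinarith [Nat.mul_le_mul_right (n * n) hn]
    omega
  calc (1 - 1 / (3 * n : ℝ)) ^ (n ^ 3 - 1)
      ≤ (1 - 1 / (3 * n : ℝ)) ^ (3 * n * n) :=
        pow_le_pow_of_le_one hr0 (sub_le_self _ (by positivity)) hexp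
    _ = ((1 - 1 / ((3 * n : ℕ) : ℝ)) ^ (3 * n)) ^ n := by rw [pow_mul]; push_cast; rfl
    _ ≤ (1 / 2) ^ n :=
        pow_le_pow_left₀ (by push_cast; positivity) (one_sub_inv_pow_le_half (by omega)) n

noncomputable def stepDown (ε : ℝ) (j : ℤ) : ℤ := max (j - 2) (-Bval ε)

noncomputable def stepUp (ε : ℝ) (j : ℤ) : ℤ := min (j + 2) (Bval ε)

section Sites

variable {ε : ℝ} {i j : ℤ}

lemma mem_Iset : i ∈ Iset ε ↔ (-Bval ε ≤ i ∧ i ≤ Bval ε) ∧ Odd i := by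
  simp [Iset]

lemma mem_Ipos : i ∈ Ipos ε ↔ i ∈ Iset ε ∧ 0 < i := mem_filter

lemma mem_Ineg : i ∈ Ineg ε ↔ i ∈ Iset ε ∧ i < 0 := mem_filter

lemma stepDown_mem (hj : j ∈ Iset ε) : stepDown ε j ∈ Iset ε := by
  rw [mem_Iset] at hj ⊢
  obtain ⟨⟨hlo, hhi⟩, hodd⟩ := hj
  refine ⟨⟨le_max_right _ _, max_le (by omega) (by omega)⟩, ?_⟩
  rcases max_choice (j - 2) (-Bval ε) with h | h <;> rw [stepDown, h]
  · exact hodd.sub_even even_two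
  · exact (Bval_odd ε).neg

lemma stepUp_mem (hj : j ∈ Iset ε) : stepUp ε j ∈ Iset ε := by
  rw [mem_Iset] at hj ⊢
  obtain ⟨⟨hlo, hhi⟩, hodd⟩ := hj
  refine ⟨⟨le_min (by omega) (by omega), min_le_right _ _⟩, ?_⟩
  rcases min_choice (j + 2) (Bval ε) with h | h <;> rw [stepUp, h]
  · exact hodd.add_even even_two
  · exact Bval_odd ε

lemma card_Ineg_le (hB : 0 ≤ Bval ε) : ((Ineg ε).card : ℝ) ≤ Bval ε := by
  have hsub : Ineg ε ⊆ Icc (-Bval ε) (-1) := fun j hj => by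
    rw [mem_Ineg, mem_Iset] at hj
    rw [mem_Icc]
    omega
  have hcard := card_le_card hsub
  rw [Int.card_Icc] at hcard
  have : ((Ineg ε).card : ℤ) ≤ Bval ε := by omega
  exact_mod_cast this

lemma sum_Iset_eq_sum_Ineg_add_sum_Ipos (g : ℤ → ℝ) :
    ∑ i ∈ Iset ε, g i = ∑ i ∈ Ineg ε, g i + ∑ i ∈ Ipos ε, g i := by
  rw [← sum_filter_add_sum_filter_not (Iset ε) (fun i => i < 0) g, Ineg, Ipos]
  congr 1
  refine sum_congr (filter_congr fun i hi => ?_) fun _ _ => rfl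
  obtain ⟨k, rfl⟩ := (mem_Iset.mp hi).2
  omega

end Sites

section Weights

variable {ε : ℝ} {i j : ℤ}

noncomputable def potentialWeight (ε : ℝ) (i : ℤ) : ℝ :=
  if 0 < i then 1 + i / (2 * Bval ε) else 2 ^ i

lemma potentialWeight_of_nonpos (hi : i ≤ 0) : potentialWeight ε i = 2 ^ i :=
  if_neg (by omega)

lemma potentialWeight_of_nonneg (hi : 0 ≤ i) : potentialWeight ε i = 1 + i / (2 * Bval ε) := by
  rcases hi.lt_or_eq with hi | rfl
  · exact if_pos hi
  · simp [potentialWeight]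

lemma one_le_potentialWeight (hB : 0 ≤ Bval ε) (hi : 0 ≤ i) : 1 ≤ potentialWeight ε i := by
  have hi' : (0 : ℝ) ≤ i := by exact_mod_cast hi
  have hB' : (0 : ℝ) ≤ Bval ε := by exact_mod_cast hB
  rw [potentialWeight_of_nonneg hi]
  exact le_add_of_nonneg_right (by positivity)

lemma potentialWeight_nonneg (hB : 0 ≤ Bval ε) (i : ℤ) : 0 ≤ potentialWeight ε i := by
  rcases le_total i 0 with hi | hi
  · rw [potentialWeight_of_nonpos hi]
    positivity
  · exact zero_le_one.trans (one_le_potentialWeight hB hi)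

lemma potentialWeight_le_three_halves (hi : i ∈ Iset ε) : potentialWeight ε i ≤ 3 / 2 := by
  rw [mem_Iset] at hi
  rcases le_or_gt i 0 with hi0 | hi0
  · rw [potentialWeight_of_nonpos hi0]
    linarith [zpow_le_one_of_nonpos₀ (one_le_two (α := ℝ)) hi0]
  · rw [potentialWeight_of_nonneg hi0.le]
    have hiB : (i : ℝ) ≤ Bval ε := by exact_mod_cast hi.1.2
    have hi0' : (0 : ℝ) < i := by exact_mod_cast hi0
    have : (i : ℝ) / (2 * Bval ε) ≤ 1 / 2 := by
      rw [div_le_iff₀ (by linarith)]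
      linarith
    linarith

lemma potentialWeight_stepDown_le_of_pos (hj : j ∈ Ipos ε) :
    potentialWeight ε (stepDown ε j) ≤ potentialWeight ε j - 1 / Bval ε := by
  obtain ⟨⟨⟨-, hjB⟩, -⟩, hj0⟩ := mem_Ipos.mp hj |>.imp_left mem_Iset.mp
  have hB : (1 : ℝ) ≤ Bval ε := by exact_mod_cast hj0.trans_le hjB
  rw [potentialWeight_of_nonneg hj0.le]
  rcases (by omega : j = 1 ∨ 2 ≤ j) with rfl | hj2
  · rw [stepDown, max_eq_left (by omega), potentialWeight_of_nonpos (by norm_num)]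
    have : 1 / (Bval ε : ℝ) ≤ 1 := by rw [div_le_one (by linarith)]; exact hB
    have : ((1 : ℤ) : ℝ) / (2 * Bval ε) = 1 / Bval ε / 2 := by push_cast; ring
    rw [show (2 : ℝ) ^ ((1 : ℤ) - 2) = 1 / 2 by norm_num]
    linarith
  · rw [stepDown, max_eq_left (by omega), potentialWeight_of_nonneg (by omega)]
    have : ((j - 2 : ℤ) : ℝ) / (2 * Bval ε) = j / (2 * Bval ε) - 1 / Bval ε := by
      push_cast
      field_simp
    linarith

lemma potentialWeight_stepUp_le_of_pos (hj : j ∈ Ipos ε) :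
    potentialWeight ε (stepUp ε j) ≤ potentialWeight ε j + 1 / Bval ε := by
  obtain ⟨⟨⟨-, hjB⟩, -⟩, hj0⟩ := mem_Ipos.mp hj |>.imp_left mem_Iset.mp
  have hB : (0 : ℝ) < Bval ε := by exact_mod_cast hj0.trans_le hjB
  have hup0 : 0 ≤ stepUp ε j := le_min (by omega) (by omega)
  rw [potentialWeight_of_nonneg hup0, potentialWeight_of_nonneg hj0.le]
  have hup : (stepUp ε j : ℝ) ≤ j + 2 := by exact_mod_cast min_le_left _ _
  have : (stepUp ε j : ℝ) / (2 * Bval ε) ≤ (j + 2) / (2 * Bval ε) :=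
    div_le_div_of_nonneg_right hup (by positivity)
  have : ((j : ℝ) + 2) / (2 * Bval ε) = j / (2 * Bval ε) + 1 / Bval ε := by
    field_simp
  linarith

lemma potentialWeight_stepDown_le_of_neg (hj : j ∈ Ineg ε) :
    potentialWeight ε (stepDown ε j) ≤ 2 ^ j / 4 + 2 ^ (-Bval ε) := by
  obtain ⟨⟨⟨hBj, -⟩, -⟩, hj0⟩ := mem_Ineg.mp hj |>.imp_left mem_Iset.mp
  have hdown : stepDown ε j ≤ 0 := max_le (by omega) (by omega)
  rw [potentialWeight_of_nonpos hdown]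
  have hpos : ∀ k : ℤ, (0 : ℝ) < 2 ^ k := fun k => zpow_pos two_pos k
  rcases max_choice (j - 2) (-Bval ε) with h | h <;> rw [stepDown, h]
  · rw [zpow_sub₀ two_ne_zero, show (2 : ℝ) ^ (2 : ℤ) = 4 by norm_num]
    linarith [hpos (-Bval ε)]
  · linarith [hpos j]

lemma potentialWeight_stepUp_le_of_neg (hj : j ∈ Ineg ε) :
    potentialWeight ε (stepUp ε j) ≤ 4 * 2 ^ j := by
  have hmem := stepUp_mem (mem_Ineg.mp hj).1
  obtain ⟨-, hj0⟩ := mem_Ineg.mp hj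
  rcases (by omega : j = -1 ∨ j ≤ -2) with rfl | hj2
  · have := potentialWeight_le_three_halves hmem
    norm_num
    linarith
  · have hup : stepUp ε j ≤ j + 2 := min_le_left _ _
    rw [potentialWeight_of_nonpos (by omega)]
    calc (2 : ℝ) ^ stepUp ε j ≤ 2 ^ (j + 2) := zpow_le_zpow_right₀ one_le_two hup
      _ = 4 * 2 ^ j := by rw [zpow_add₀ two_ne_zero]; norm_num; ring

end Weights

namespace MProcess

variable {ε : ℝ} (P : MProcess ε)

lemma p_nonneg (t : ℕ) (i : ℤ) : 0 ≤ P.p t i := (P.q_nonneg t i).trans (P.q_le_p t i)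

noncomputable def flow (f : ℤ → ℝ) (t : ℕ) (j : ℤ) : ℝ :=
  f (stepDown ε j) * P.q t j + f (stepUp ε j) * (P.p t j - P.q t j)

lemma sum_mul_p_succ (f : ℤ → ℝ) {t : ℕ} (ht : 1 ≤ t) :
    ∑ i ∈ Iset ε, f i * P.p (t + 1) i = ∑ j ∈ Iset ε, P.flow f t j := by
  have hfiber : ∀ i ∈ Iset ε, f i * P.p (t + 1) i =
      ∑ j ∈ (Iset ε).filter (fun j => stepDown ε j = i), f (stepDown ε j) * P.q t j +
      ∑ j ∈ (Iset ε).filter (fun j => stepUp ε j = i),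
        f (stepUp ε j) * (P.p t j - P.q t j) := fun i hi => by
    rw [P.update t ht i hi, mul_add, mul_sum, mul_sum]
    congr 1 <;> refine sum_congr rfl fun j hj => ?_ <;> rw [(mem_filter.mp hj).2]
  rw [sum_congr rfl hfiber, sum_add_distrib,
    sum_fiberwise_of_maps_to (fun _ => stepDown_mem),
    sum_fiberwise_of_maps_to (fun _ => stepUp_mem), ← sum_add_distrib]
  rfl

lemma sum_p_eq_one (h1 : ∑ i ∈ Iset ε, P.p 1 i = 1) {t : ℕ} (ht : 1 ≤ t) :
    ∑ i ∈ Iset ε, P.p t i = 1 := by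
  induction t, ht using Nat.le_induction with
  | base => exact h1
  | succ t ht ih =>
    have h := P.sum_mul_p_succ (fun _ => 1) ht
    simp only [flow, one_mul, add_sub_cancel] at h
    rw [h, ih]

noncomputable def potential (t : ℕ) : ℝ := ∑ i ∈ Iset ε, potentialWeight ε i * P.p t i

section Flow

variable {j : ℤ} {t : ℕ}

lemma flow_le_three_halves_mul (hj : j ∈ Iset ε) :
    P.flow (potentialWeight ε) t j ≤ 3 / 2 * P.p t j := by
  have hd := mul_le_mul_of_nonneg_right (potentialWeight_le_three_halves (stepDown_mem hj))
    (P.q_nonneg t j)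
  have hu := mul_le_mul_of_nonneg_right (potentialWeight_le_three_halves (stepUp_mem hj))
    (sub_nonneg.mpr (P.q_le_p t j))
  unfold flow
  linarith

lemma flow_le_of_pos (hj : j ∈ Ipos ε) :
    P.flow (potentialWeight ε) t j ≤
      potentialWeight ε j * P.p t j + (P.p t j - 2 * P.q t j) / Bval ε := by
  have hd := mul_le_mul_of_nonneg_right (potentialWeight_stepDown_le_of_pos hj) (P.q_nonneg t j)
  have hu := mul_le_mul_of_nonneg_right (potentialWeight_stepUp_le_of_pos hj)
    (sub_nonneg.mpr (P.q_le_p t j))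
  have : (P.p t j - 2 * P.q t j) / Bval ε =
      1 / Bval ε * (P.p t j - P.q t j) - 1 / Bval ε * P.q t j := by
    ring
  unfold flow
  linarith

lemma flow_le_of_neg (ht : 1 ≤ t) (hj : j ∈ Ineg ε) :
    P.flow (potentialWeight ε) t j ≤
      2 ^ j * P.p t j / 2 + 3 / 2 * (1 / (Bval ε : ℝ) ^ 4 * ∑ i ∈ Ipos ε, P.p t i) +
        2 ^ (-Bval ε) * P.p t j := by
  have hq := P.q_nonneg t j
  have hqp := P.q_le_p t j
  have h2j : (0 : ℝ) < 2 ^ j := zpow_pos two_pos j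
  have hδ : (0 : ℝ) < 2 ^ (-Bval ε) := zpow_pos two_pos _
  by_cases hheavy : 1 / (Bval ε : ℝ) ^ 4 * ∑ i ∈ Ipos ε, P.p t i ≤ P.p t j
  · have hup := mul_le_mul_of_nonneg_left (P.up_small t ht j hj hheavy) h2j.le
    have hd := mul_le_mul_of_nonneg_right (potentialWeight_stepDown_le_of_neg hj) hq
    have hu := mul_le_mul_of_nonneg_right (potentialWeight_stepUp_le_of_neg hj)
      (sub_nonneg.mpr hqp)
    have hX : 0 ≤ 1 / (Bval ε : ℝ) ^ 4 * ∑ i ∈ Ipos ε, P.p t i :=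
      mul_nonneg (by positivity) (sum_nonneg fun i _ => P.p_nonneg t i)
    unfold flow
    linarith [mul_le_mul_of_nonneg_left hqp h2j.le, mul_le_mul_of_nonneg_left hqp hδ.le]
  · have hlight := P.flow_le_three_halves_mul (t := t) (mem_Ineg.mp hj).1
    have := mul_nonneg h2j.le (P.p_nonneg t j)
    have := mul_nonneg hδ.le (P.p_nonneg t j)
    linarith

end Flow

lemma sum_flow_Ipos_le {t : ℕ} (ht : 1 ≤ t) (hB : 0 ≤ Bval ε) :
    ∑ j ∈ Ipos ε, P.flow (potentialWeight ε) t j ≤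
      ∑ j ∈ Ipos ε, potentialWeight ε j * P.p t j -
        7 / 8 * (∑ j ∈ Ipos ε, P.p t j) / Bval ε := by
  have hB' : (0 : ℝ) ≤ Bval ε := by exact_mod_cast hB
  have hdrift : (∑ j ∈ Ipos ε, P.p t j - 2 * ∑ j ∈ Ipos ε, P.q t j) / Bval ε ≤
      -(7 / 8 * (∑ j ∈ Ipos ε, P.p t j)) / Bval ε :=
    div_le_div_of_nonneg_right (by linarith [P.mass_down t ht]) hB'
  calc ∑ j ∈ Ipos ε, P.flow (potentialWeight ε) t j
      ≤ ∑ j ∈ Ipos ε, (potentialWeight ε j * P.p t j + (P.p t j - 2 * P.q t j) / Bval ε) :=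
        sum_le_sum fun j hj => P.flow_le_of_pos hj
    _ = ∑ j ∈ Ipos ε, potentialWeight ε j * P.p t j +
          (∑ j ∈ Ipos ε, P.p t j - 2 * ∑ j ∈ Ipos ε, P.q t j) / Bval ε := by
        rw [sum_add_distrib, ← sum_div, sum_sub_distrib, ← mul_sum]
    _ ≤ _ := by rw [neg_div] at hdrift; linarith

lemma sum_flow_Ineg_le {t : ℕ} (ht : 1 ≤ t) (hB : 0 ≤ Bval ε)
    (hm : ∑ i ∈ Iset ε, P.p t i = 1) :
    ∑ j ∈ Ineg ε, P.flow (potentialWeight ε) t j ≤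
      (∑ j ∈ Ineg ε, 2 ^ j * P.p t j) / 2 +
        3 / 2 * Bval ε * (1 / (Bval ε : ℝ) ^ 4 * ∑ i ∈ Ipos ε, P.p t i) +
          2 ^ (-Bval ε) := by
  set X := 1 / (Bval ε : ℝ) ^ 4 * ∑ i ∈ Ipos ε, P.p t i
  have hX : 0 ≤ X := mul_nonneg (by positivity) (sum_nonneg fun i _ => P.p_nonneg t i)
  have hmass : ∑ j ∈ Ineg ε, P.p t j ≤ 1 :=
    hm ▸ sum_le_sum_of_subset_of_nonneg (filter_subset _ _) fun i _ _ => P.p_nonneg t i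
  have hcard := mul_le_mul_of_nonneg_right (card_Ineg_le hB) (by positivity : 0 ≤ 3 / 2 * X)
  have hbottom := mul_le_mul_of_nonneg_left hmass (zpow_pos two_pos (-Bval ε)).le
  calc ∑ j ∈ Ineg ε, P.flow (potentialWeight ε) t j
      ≤ ∑ j ∈ Ineg ε, (2 ^ j * P.p t j / 2 + 3 / 2 * X + 2 ^ (-Bval ε) * P.p t j) :=
        sum_le_sum fun j hj => P.flow_le_of_neg ht hj
    _ = (∑ j ∈ Ineg ε, 2 ^ j * P.p t j) / 2 + (Ineg ε).card * (3 / 2 * X) +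
          2 ^ (-Bval ε) * ∑ j ∈ Ineg ε, P.p t j := by
        rw [sum_add_distrib, sum_add_distrib, sum_const, nsmul_eq_mul, ← sum_div, ← mul_sum]
    _ ≤ _ := by linarith

lemma sum_Ipos_p_le_potential (hB : 0 ≤ Bval ε) (t : ℕ) :
    ∑ i ∈ Ipos ε, P.p t i ≤ P.potential t := by
  have hneg : 0 ≤ ∑ i ∈ Ineg ε, potentialWeight ε i * P.p t i :=
    sum_nonneg fun i _ => mul_nonneg (potentialWeight_nonneg hB i) (P.p_nonneg t i)
  have hpos : ∑ i ∈ Ipos ε, P.p t i ≤ ∑ i ∈ Ipos ε, potentialWeight ε i * P.p t i :=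
    sum_le_sum fun i hi =>
      le_mul_of_one_le_left (P.p_nonneg t i) (one_le_potentialWeight hB (mem_Ipos.mp hi).2.le)
  rw [potential, sum_Iset_eq_sum_Ineg_add_sum_Ipos]
  linarith

lemma potential_le_three_halves {t : ℕ} (hm : ∑ i ∈ Iset ε, P.p t i = 1) :
    P.potential t ≤ 3 / 2 :=
  calc P.potential t ≤ ∑ i ∈ Iset ε, 3 / 2 * P.p t i :=
        sum_le_sum fun i hi =>
          mul_le_mul_of_nonneg_right (potentialWeight_le_three_halves hi) (P.p_nonneg t i)
    _ = 3 / 2 := by rw [← mul_sum, hm, mul_one]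

lemma potential_succ_le (hB : 3 ≤ Bval ε) {t : ℕ} (ht : 1 ≤ t)
    (hm : ∑ i ∈ Iset ε, P.p t i = 1) :
    P.potential (t + 1) ≤ (1 - 1 / (3 * Bval ε)) * P.potential t + 2 ^ (-Bval ε) := by
  set S := ∑ i ∈ Ipos ε, P.p t i
  set N := ∑ j ∈ Ineg ε, 2 ^ j * P.p t j
  set W := ∑ j ∈ Ipos ε, potentialWeight ε j * P.p t j
  have hB' : (3 : ℝ) ≤ Bval ε := by exact_mod_cast hB
  have hpotential : P.potential t = N + W := by
    rw [potential, sum_Iset_eq_sum_Ineg_add_sum_Ipos]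
    congr 1
    exact sum_congr rfl fun j hj => by rw [potentialWeight_of_nonpos (mem_Ineg.mp hj).2.le]
  have hstep : P.potential (t + 1) ≤
      N / 2 + 3 / 2 * Bval ε * (1 / (Bval ε : ℝ) ^ 4 * S) + 2 ^ (-Bval ε) +
        (W - 7 / 8 * S / Bval ε) := by
    rw [potential, P.sum_mul_p_succ _ ht, sum_Iset_eq_sum_Ineg_add_sum_Ipos]
    exact add_le_add (P.sum_flow_Ineg_le ht (by omega) hm) (P.sum_flow_Ipos_le ht (by omega))
  have hN : 0 ≤ N := sum_nonneg fun j _ => mul_nonneg (zpow_pos two_pos j).le (P.p_nonneg t j)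
  have hS : 0 ≤ S := sum_nonneg fun i _ => P.p_nonneg t i
  have hWS : W ≤ 3 / 2 * S := by
    rw [mul_sum]
    exact sum_le_sum fun j hj => mul_le_mul_of_nonneg_right
      (potentialWeight_le_three_halves (mem_Ipos.mp hj).1) (P.p_nonneg t j)
  -- with `u = 1/B ≤ 1/3` this is `N/2 + (3/2) u³ S + W - (7/8) u S ≤ (1 - u/3) (N + W)`
  set u : ℝ := 1 / Bval ε with hu
  have hu0 : 0 < u := by positivity
  have hu3 : u ≤ 1 / 3 := by rw [hu, div_le_div_iff₀ (by linarith) (by norm_num)]; linarith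
  have hcube : 3 / 2 * Bval ε * (1 / (Bval ε : ℝ) ^ 4 * S) = 3 / 2 * u ^ 3 * S := by
    rw [hu]; field_simp
  have hdiv : 7 / 8 * S / Bval ε = 7 / 8 * u * S := by rw [hu]; ring
  have hrate : 1 - 1 / (3 * (Bval ε : ℝ)) = 1 - u / 3 := by rw [hu]; ring
  rw [hpotential, hrate]
  rw [hcube, hdiv] at hstep
  nlinarith [mul_le_mul_of_nonneg_left hWS hu0.le, mul_nonneg (mul_nonneg hu0.le hu0.le) hS,
    mul_nonneg hu0.le hS, mul_le_mul_of_nonneg_right hu3 hN,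
    mul_le_mul_of_nonneg_right (mul_le_mul hu3 hu3 hu0.le (by norm_num)) (mul_nonneg hu0.le hS)]

lemma potential_le (hB : 3 ≤ Bval ε) (h1 : ∑ i ∈ Iset ε, P.p 1 i = 1) (n : ℕ) :
    P.potential (n + 1) ≤
      (1 - 1 / (3 * Bval ε)) ^ n * (3 / 2) + 3 * Bval ε * 2 ^ (-Bval ε) := by
  set r : ℝ := 1 - 1 / (3 * Bval ε)
  set c : ℝ := 3 * Bval ε * 2 ^ (-Bval ε)
  have hB' : (3 : ℝ) ≤ Bval ε := by exact_mod_cast hB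
  have hr : 0 ≤ r := by
    have : 1 / (3 * (Bval ε : ℝ)) ≤ 1 := by rw [div_le_one (by linarith)]; linarith
    linarith
  have hc : 0 ≤ c := by positivity
  -- `c` is the fixed point of `x ↦ r x + 2^(-B)`
  have hfix : r * c + 2 ^ (-Bval ε) = c := by
    simp only [r, c]
    field_simp
    ring
  have hgeom := le_geom (u := fun k => P.potential (k + 1) - c) hr n fun k _ => by
    have := P.potential_succ_le hB (t := k + 1) (by omega) (P.sum_p_eq_one h1 (by omega))
    linarith
  have h0 := P.potential_le_three_halves h1
  nlinarith [pow_nonneg hr n]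

end MProcess

/-- Lemma 3 of the paper: there is a universal constant `C > 0` such that for
every `ε ∈ (0, 1/32)` and every process on `I_ε` whose initial configuration has total mass `1`,
after `t = ⌈C · B_ε³⌉` steps the mass on `I_ε⁺` is at most `64 · ε · B_ε³`. -/
theorem stmt0 :
    ∃ C : ℝ, 0 < C ∧
      ∀ ε : ℝ, ε ∈ Set.Ioo (0 : ℝ) (1 / 32) →
        ∀ P : MProcess ε, (∑ i ∈ Iset ε, P.p 1 i) = 1 →
          ∑ i ∈ Ipos ε, P.p (⌈C * (Bval ε : ℝ) ^ 3⌉₊) i ≤ 64 * ε * (Bval ε : ℝ) ^ 3 := by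
  refine ⟨1, one_pos, fun ε ⟨hε0, hε⟩ P h1 => ?_⟩
  have hB : 13 ≤ Bval ε :=
    two_mul_add_three_le_Bval (k := 5) hε0 (by rw [lt_div_iff₀ hε0]; linarith)
  obtain ⟨n, hn⟩ : ∃ n : ℕ, Bval ε = n := ⟨_, (Int.toNat_of_nonneg (by omega)).symm⟩
  have hn13 : 13 ≤ n := by omega
  have hT : ⌈1 * (Bval ε : ℝ) ^ 3⌉₊ = n ^ 3 - 1 + 1 := by
    have : 1 ≤ n ^ 3 := Nat.one_le_pow _ _ (by omega)
    rw [hn, one_mul, Int.cast_natCast, ← Nat.cast_pow, Nat.ceil_natCast]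
    omega
  have hδ : (2 : ℝ) ^ (-Bval ε) ≤ ε := two_zpow_neg_Bval_le hε0 (by linarith)
  have hdecay : (1 - 1 / (3 * Bval ε : ℝ)) ^ (n ^ 3 - 1) ≤ 2 ^ (-Bval ε) := by
    rw [hn, zpow_neg, zpow_natCast, ← inv_pow, inv_eq_one_div, Int.cast_natCast]
    exact one_sub_inv_three_mul_pow_le (by omega)
  have hB' : (13 : ℝ) ≤ Bval ε := by exact_mod_cast hB
  rw [hT]
  calc ∑ i ∈ Ipos ε, P.p (n ^ 3 - 1 + 1) i
      ≤ P.potential (n ^ 3 - 1 + 1) := P.sum_Ipos_p_le_potential (by omega) _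
    _ ≤ (1 - 1 / (3 * Bval ε : ℝ)) ^ (n ^ 3 - 1) * (3 / 2) + 3 * Bval ε * 2 ^ (-Bval ε) :=
        P.potential_le (by omega) h1 _
    _ ≤ (3 / 2 + 3 * Bval ε) * ε := by nlinarith
    _ ≤ 64 * ε * (Bval ε : ℝ) ^ 3 := by
        have : 3 / 2 + 3 * (Bval ε : ℝ) ≤ 64 * Bval ε ^ 3 := by
          nlinarith [pow_le_pow_left₀ (by norm_num) hB' 2]
        nlinarith
end

section
/- There exists a universal constant C > 0 such that the following holds. Let X be a measurable space, H a countable class of measurable functions X → {−1,+1} of VC dimension at most d, D a probability measure on X, g ∈ H, ε ∈ (0,1) (the clip parameter), i ≥ 2, and h₁,…,h_{i−1} : X → {−1,+1} measurable functions with D({x : Maj(h₁,…,h_{i−1})(x) ≠ g(x)}) > 0. For every δ ∈ (0,1), if m ≥ C·(d + log(1/δ)), then with probability at least 1 − δ over an i.i.d. sample (x₁,…,x_m) drawn from the conditional distribution D|_{Maj(h₁,…,h_{i−1}) ≠ g}, every h ∈ H satisfying h(x_j) = g(x_j) for all j ∈ {1,…,m} also satisfies D({x : Maj(h₁,…,h_{i−1})(x)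 ≠ g(x) and h(x) ≠ g(x)}) ≤ (1/16) · D({x : Maj(h₁,…,h_{i−1})(x) ≠ g(x)}). -/
/-! Conditioned on `E = {Maj(h₁,…,h_{i-1}) ≠ g}`, the claim is the ε-net theorem for `ε = 1/16`
applied to the disagreement sets `{h ≠ g}`, `h ∈ H`, which again form a class of VC dimension at
most `d`: since `D(E ∩ {h ≠ g}) = D(E) · D|_E(h ≠ g)`, a consistent `h` can only violate the bound
if the sample misses a set of `D|_E`-measure `> 1/16`.

The ε-net theorem is proved by double sampling. If the sample misses such a set `A`, an
independent second sample hits `A` at least `k = m/32 + 1` times with probability `≥ 1/2`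
(Chebyshev). Swapping coordinates between the two samples preserves the product measure, and for a
fixed pair of samples only `∑_{i ≤ d} C(2m, i)` traces of the class on the `2m` points occur
(Sauer–Shelah), while for each trace at most `2^(m-k)` of the `2^m` swaps put no hit in the first
sample and `k` hits in the second. Hence the sample misses a heavy set with probability at most
`2 · ∑_{i ≤ d} C(2m, i) / 2^k`, which is `≤ δ` once `m ≥ 10000 (d + log(1/δ))`.
-/

open MeasureTheory ProbabilityTheory
open scoped ENNReal

/-- `clip_ε(x) := min(max(-B_ε, x), B_ε)`. -/
noncomputable def clip (ε : ℝ) (x : ℤ) : ℤ := min (max (-(Bval ε)) x) (Bval ε)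

/-- `Vote(h₁,…,h_n)(x)`, defined recursively by `Vote(h₁)(x) = h₁(x)` and
`Vote(h₁,…,h_n)(x) = clip_ε(Vote(h₁,…,h_{n-1})(x) + 2 hₙ(x))`.  (The value at `n = 0` is a
junk value, never used.) -/
noncomputable def VoteSeq (ε : ℝ) {X : Type*} (h : ℕ → X → ℤ) : ℕ → X → ℤ
  | 0 => fun _ => 0
  | 1 => fun x => h 1 x
  | n + 2 => fun x => clip ε (VoteSeq ε h (n + 1) x + 2 * h (n + 2) x)

/-- `Vote_g(h₁,…,h_n)(x)`, defined recursively by `Vote_g(h₁)(x) = -1` if `h₁(x) = g(x)` and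
`+1` otherwise, and `Vote_g(h₁,…,h_n)(x) = clip_ε(Vote_g(h₁,…,h_{n-1})(x) + 2 sₙ(x))` where
`sₙ(x) = -1` if `hₙ(x) = g(x)` and `+1` otherwise. -/
noncomputable def VoteGSeq (ε : ℝ) {X : Type*} (h : ℕ → X → ℤ) (g : X → ℤ) : ℕ → X → ℤ
  | 0 => fun _ => 0
  | 1 => fun x => if h 1 x = g x then -1 else 1
  | n + 2 => fun x =>
      clip ε (VoteGSeq ε h g (n + 1) x + 2 * (if h (n + 2) x = g x then -1 else 1))

/-- `Maj(h₁,…,h_n)(x) := +1` if `Vote(h₁,…,h_n)(x) ≥ 0`, and `-1` otherwise. -/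
noncomputable def MajSeq (ε : ℝ) {X : Type*} (h : ℕ → X → ℤ) (n : ℕ) (x : X) : ℤ :=
  if 0 ≤ VoteSeq ε h n x then 1 else -1

/-- `H` has VC dimension at most `d`: every finite set shattered by `H` (viewing elements of
`H` as `±1`-valued functions) has cardinality at most `d`. -/
def VCDimLE {X : Type*} (H : Set (X → ℤ)) (d : ℕ) : Prop :=
  ∀ S : Finset X,
    (∀ σ : X → Bool, ∃ h ∈ H, ∀ x ∈ S, h x = (if σ x then 1 else -1)) → S.card ≤ d

open Finset

section VCDimension

variable {X : Type*}

def SetFamilyVCDimLE (𝒜 : Set (Set X)) (d : ℕ) : Prop :=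
  ∀ S : Finset X, (∀ T ⊆ S, ∃ A ∈ 𝒜, ∀ x ∈ S, x ∈ A ↔ x ∈ T) → #S ≤ d

theorem SetFamilyVCDimLE.mono {𝒜 ℬ : Set (Set X)} {d : ℕ} (h : SetFamilyVCDimLE 𝒜 d)
    (hℬ : ℬ ⊆ 𝒜) : SetFamilyVCDimLE ℬ d := fun S hS =>
  h S fun T hT => (hS T hT).imp fun _ hA => ⟨hℬ hA.1, hA.2⟩

theorem SetFamilyVCDimLE.eq_of_zero {𝒜 : Set (Set X)} (h : SetFamilyVCDimLE 𝒜 0)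
    {A B : Set X} (hA : A ∈ 𝒜) (hB : B ∈ 𝒜) : A = B := by
  ext x
  by_contra hx
  have h_split : (∃ C ∈ 𝒜, x ∈ C) ∧ ∃ C ∈ 𝒜, x ∉ C := by
    by_cases hxA : x ∈ A
    exacts [⟨⟨A, hA, hxA⟩, B, hB, by tauto⟩, ⟨⟨B, hB, by tauto⟩, A, hA, hxA⟩]
  obtain ⟨⟨C₁, hC₁, hx₁⟩, C₂, hC₂, hx₂⟩ := h_split
  refine absurd (h {x} fun T hT => ?_) (by simp)
  rcases subset_singleton_iff.1 hT with rfl | rfl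
  exacts [⟨C₂, hC₂, by simpa using hx₂⟩, ⟨C₁, hC₁, by simpa using hx₁⟩]

theorem VCDimLE.setFamilyVCDimLE_disagreementSets {H : Set (X → ℤ)} {d : ℕ} {g : X → ℤ}
    (hH : VCDimLE H d) (hH_pm : ∀ f ∈ H, ∀ x, f x = 1 ∨ f x = -1)
    (hg_pm : ∀ x, g x = 1 ∨ g x = -1) :
    SetFamilyVCDimLE ((fun f => {x | f x ≠ g x}) '' H) d := by
  classical
  intro S hS
  refine hH S fun σ => ?_
  obtain ⟨_, ⟨f, hf, rfl⟩, hfS⟩ :=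
    hS {x ∈ S | (if σ x then 1 else -1) ≠ g x} (filter_subset _ _)
  refine ⟨f, hf, fun x hx => ?_⟩
  have := hfS x hx
  simp only [Set.mem_ofPred_eq, mem_filter, hx, true_and] at this
  split_ifs at this ⊢ <;> rcases hH_pm f hf x with h | h <;> rcases hg_pm x with h' | h' <;> omega

variable {ι : Type*} [Fintype ι]

open Classical in
noncomputable def sampleTrace (pt : ι → X) (A : Set X) : Finset ι := {i | pt i ∈ A}

@[simp]
theorem mem_sampleTrace {pt : ι → X} {A : Set X} {i : ι} : i ∈ sampleTrace pt A ↔ pt i ∈ A := by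
  simp [sampleTrace]

theorem SetFamilyVCDimLE.vcDim_le [DecidableEq ι] {𝒜 : Set (Set X)} {d : ℕ}
    (h : SetFamilyVCDimLE 𝒜 d) (pt : ι → X) {𝒯 : Finset (Finset ι)}
    (h𝒯 : ∀ t ∈ 𝒯, ∃ A ∈ 𝒜, sampleTrace pt A = t) :
    𝒯.vcDim ≤ d := by
  classical
  refine Finset.sup_le fun s hs => ?_
  rw [mem_shatterer] at hs
  have h_inj : Set.InjOn pt s := by
    intro z₁ hz₁ z₂ hz₂ hpt
    obtain ⟨u, hu, hsu⟩ := hs (singleton_subset_iff.2 hz₁)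
    obtain ⟨A, -, rfl⟩ := h𝒯 u hu
    have hz₁A : pt z₁ ∈ A := mem_sampleTrace.1 (mem_inter.1 (hsu ▸ mem_singleton_self z₁)).2
    have : z₂ ∈ s ∩ sampleTrace pt A := mem_inter.2 ⟨hz₂, mem_sampleTrace.2 (hpt ▸ hz₁A)⟩
    rw [hsu] at this
    exact (mem_singleton.1 this).symm
  have h_shatter : ∀ T ⊆ s.image pt, ∃ A ∈ 𝒜, ∀ x ∈ s.image pt, x ∈ A ↔ x ∈ T := by
    intro T _
    obtain ⟨u, hu, hsu⟩ := hs (filter_subset (fun z => pt z ∈ T) s)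
    obtain ⟨A, hA, rfl⟩ := h𝒯 u hu
    refine ⟨A, hA, ?_⟩
    simp only [mem_image, forall_exists_index, and_imp, forall_apply_eq_imp_iff₂]
    intro z hz
    have := congrArg (z ∈ ·) hsu
    simpa [hz] using this
  rw [← card_image_of_injOn h_inj]
  exact h _ h_shatter

theorem SetFamilyVCDimLE.card_traces_le [DecidableEq ι] {𝒜 : Set (Set X)} {d : ℕ}
    (h : SetFamilyVCDimLE 𝒜 d) (pt : ι → X)
    [DecidablePred fun t : Finset ι => ∃ A ∈ 𝒜, sampleTrace pt A = t] :
    #{t : Finset ι | ∃ A ∈ 𝒜, sampleTrace pt A = t} ≤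
      ∑ k ∈ Iic d, (Fintype.card ι).choose k := by
  set 𝒯 : Finset (Finset ι) := {t | ∃ A ∈ 𝒜, sampleTrace pt A = t}
  calc #𝒯 ≤ #𝒯.shatterer := card_le_card_shatterer _
    _ ≤ ∑ k ∈ Iic 𝒯.vcDim, (Fintype.card ι).choose k := card_shatterer_le_sum_vcDim
    _ ≤ _ := sum_le_sum_of_subset
        (Iic_subset_Iic.2 (h.vcDim_le pt fun _ ht => (mem_filter.1 ht).2))

end VCDimension

theorem card_filter_forall_mem_eq {ι : Type*} [Fintype ι] [DecidableEq ι] (T : Finset ι)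
    (c : ι → Bool) :
    #{σ : ι → Bool | ∀ j ∈ T, σ j = c j} = 2 ^ (Fintype.card ι - #T) := by
  have : ({σ : ι → Bool | ∀ j ∈ T, σ j = c j} : Finset _) =
      Fintype.piFinset fun j => if j ∈ T then {c j} else univ := by
    ext σ
    simp only [mem_filter, mem_univ, true_and, Fintype.mem_piFinset]
    refine forall_congr' fun j => ?_
    split_ifs <;> simp_all
  rw [this, Fintype.card_piFinset]
  simp [apply_ite, prod_ite, filter_notMem_eq_sdiff, card_sdiff_of_subset (subset_univ T)]

/-- Read `t` as the trace of a set on the points `Fin m ⊕ Fin m` of two samples; position `j` of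
the first swapped sample carries the point indexed by `if σ j then .inr j else .inl j`. -/
theorem card_filter_swap_le {m : ℕ} (t : Finset (Fin m ⊕ Fin m)) (k : ℕ) :
    #{σ : Fin m → Bool | (∀ j, (if σ j then .inr j else .inl j) ∉ t) ∧
        k ≤ #{j | (if σ j then .inl j else .inr j) ∈ t}} ≤ 2 ^ (m - k) := by
  set W : Finset (Fin m) := {j | .inl j ∈ t ∨ .inr j ∈ t}
  -- when the first swapped sample avoids `t`, `σ` is forced on `W` and `W` is the set of hits
  have h_forced : ∀ σ : Fin m → Bool, (∀ j, (if σ j then .inr j else .inl j) ∉ t) →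
      (∀ j ∈ W, σ j = decide (.inl j ∈ t)) ∧
        ({j | (if σ j then .inl j else .inr j) ∈ t} : Finset _) = W := by
    intro σ hσ
    refine ⟨fun j hj => ?_, ?_⟩
    · have := hσ j
      simp only [W, mem_filter, mem_univ, true_and] at hj
      cases hσj : σ j <;> simp_all
    · ext j
      have := hσ j
      simp only [W, mem_filter, mem_univ, true_and]
      cases hσj : σ j <;> simp_all
  rcases Finset.eq_empty_or_nonempty
      ({σ : Fin m → Bool | (∀ j, (if σ j then .inr j else .inl j) ∉ t) ∧
        k ≤ #{j | (if σ j then .inl j else .inr j) ∈ t}} : Finset _) with h | ⟨σ₀, hσ₀⟩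
  · simp [h]
  have hσ₀ := (mem_filter.1 hσ₀).2
  have hkW : k ≤ #W := (h_forced σ₀ hσ₀.1).2 ▸ hσ₀.2
  calc _ ≤ #{σ : Fin m → Bool | ∀ j ∈ W, σ j = decide (.inl j ∈ t)} :=
        card_le_card fun σ hσ => mem_filter.2 ⟨mem_univ _, (h_forced σ (mem_filter.1 hσ).2.1).1⟩
    _ = 2 ^ (m - #W) := by convert card_filter_forall_mem_eq W _; rw [Fintype.card_fin]
    _ ≤ 2 ^ (m - k) := Nat.pow_le_pow_right two_pos (by omega)

section Sampling

variable {X : Type*} {m : ℕ}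

open Classical in
noncomputable def hitCount (A : Set X) (xs : Fin m → X) : ℕ := #{j | xs j ∈ A}

theorem natCast_hitCount_eq_sum (A : Set X) :
    (fun xs : Fin m → X => (hitCount A xs : ℝ)) = ∑ j, fun xs => A.indicator 1 (xs j) := by
  classical
  ext xs
  rw [hitCount, card_filter, Finset.sum_apply]
  push_cast
  simp [Set.indicator_apply]

variable [MeasurableSpace X]

theorem measurable_hitCount {A : Set X} (hA : MeasurableSet A) :
    Measurable (hitCount (m := m) A) := by
  classical
  have : hitCount (m := m) A = fun xs => ∑ j, if xs j ∈ A then 1 else 0 :=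
    funext fun xs => card_filter _ _
  rw [this]
  exact Finset.measurable_sum _ fun j _ =>
    Measurable.ite (measurable_pi_apply j hA) measurable_const measurable_const

variable (μ : Measure X) [IsProbabilityMeasure μ] {A : Set X}

theorem memLp_indicator_one (hA : MeasurableSet A) : MemLp (A.indicator (1 : X → ℝ)) 2 μ :=
  memLp_indicator_const 2 hA 1 (Or.inr (measure_ne_top _ _))

theorem memLp_natCast_hitCount (hA : MeasurableSet A) :
    MemLp (fun xs : Fin m → X => (hitCount A xs : ℝ)) 2 (Measure.pi fun _ => μ) := by
  rw [natCast_hitCount_eq_sum]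
  exact memLp_finsetSum' _ fun j _ =>
    (memLp_indicator_one μ hA).comp_measurePreserving (measurePreserving_eval _ j)

theorem integral_natCast_hitCount (hA : MeasurableSet A) :
    ∫ xs, (hitCount A xs : ℝ) ∂(Measure.pi fun _ : Fin m => μ) = m * μ.real A := by
  have h_eval : ∀ j : Fin m,
      ∫ xs, A.indicator 1 (xs j) ∂(Measure.pi fun _ => μ) = μ.real A := fun j => by
    rw [integral_comp_eval (μ := fun _ => μ) (memLp_indicator_one μ hA).aestronglyMeasurable]
    exact integral_indicator_one hA
  have h_int : ∀ j : Fin m,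
      Integrable (fun xs : Fin m → X => A.indicator (1 : X → ℝ) (xs j)) (Measure.pi fun _ => μ) :=
    fun j => ((memLp_indicator_one μ hA).comp_measurePreserving
      (measurePreserving_eval _ j)).integrable one_le_two
  simp_rw [congrFun (natCast_hitCount_eq_sum A), Finset.sum_apply]
  rw [integral_finsetSum _ fun j _ => h_int j]
  simp [h_eval]

theorem variance_natCast_hitCount_le (hA : MeasurableSet A) :
    Var[fun xs : Fin m → X => (hitCount A xs : ℝ); Measure.pi fun _ => μ] ≤ m / 4 := by
  have h_mem : ∀ x, A.indicator (1 : X → ℝ) x ∈ Set.Icc 0 1 := fun x => by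
    by_cases hx : x ∈ A <;> simp [hx]
  rw [natCast_hitCount_eq_sum, variance_sum_pi fun _ => memLp_indicator_one μ hA]
  calc ∑ _j : Fin m, Var[A.indicator 1; μ] ≤ ∑ _j : Fin m, ((1 - 0) / 2 : ℝ) ^ 2 :=
        sum_le_sum fun _ _ => variance_le_sq_of_bounded (ae_of_all _ h_mem)
          (measurable_const.indicator hA).aemeasurable
    _ = m / 4 := by simp; ring

theorem half_le_pi_hitCount (hA : MeasurableSet A) (hμA : 1 / 16 < μ A) (hm : 512 ≤ m) :
    1 / 2 ≤ Measure.pi (fun _ : Fin m => μ) {ys | m / 32 + 1 ≤ hitCount A ys} := by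
  set P := Measure.pi fun _ : Fin m => μ
  have hp : 1 / 16 < μ.real A := by
    simpa [measureReal_def] using ENNReal.toReal_strict_mono (measure_ne_top μ A) hμA
  have hmR : (512 : ℝ) ≤ m := by exact_mod_cast hm
  have h_few : {ys : Fin m → X | ¬ m / 32 + 1 ≤ hitCount A ys} ⊆
      {ys | (m : ℝ) / 32 ≤ |(hitCount A ys : ℝ) - ∫ xs, (hitCount A xs : ℝ) ∂P|} := by
    intro ys hys
    simp only [Set.mem_ofPred_eq, not_le, Nat.lt_succ_iff] at hys ⊢
    have h_le : (hitCount A ys : ℝ) ≤ m / 32 :=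
      (Nat.cast_le.2 hys).trans Nat.cast_div_le
    rw [abs_sub_comm, integral_natCast_hitCount μ hA]
    refine le_trans ?_ (le_abs_self _)
    nlinarith
  have h_compl : P {ys | m / 32 + 1 ≤ hitCount A ys}ᶜ ≤ 2⁻¹ :=
    calc _ ≤ _ := measure_mono h_few
      _ ≤ ENNReal.ofReal (Var[fun xs => (hitCount A xs : ℝ); P] / (m / 32) ^ 2) :=
          meas_ge_le_variance_div_sq (memLp_natCast_hitCount μ hA) (by positivity)
      _ ≤ ENNReal.ofReal 2⁻¹ := by
          gcongr
          rw [div_le_iff₀ (by positivity)]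
          nlinarith [variance_natCast_hitCount_le (m := m) μ hA]
      _ = 2⁻¹ := by simp
  have h_meas : MeasurableSet {ys : Fin m → X | m / 32 + 1 ≤ hitCount A ys} :=
    measurable_hitCount hA measurableSet_Ici
  rw [← compl_compl {ys : Fin m → X | m / 32 + 1 ≤ hitCount A ys},
    prob_compl_eq_one_sub h_meas.compl, one_div, ← ENNReal.one_sub_inv_two]
  exact tsub_le_tsub_left h_compl 1

end Sampling

section Symmetrization

theorem mul_measure_le_prod_of_le_measure_slice {α β : Type*} [MeasurableSpace α]
    [MeasurableSpace β] (μ : Measure α) (ν : Measure β) [SFinite ν] {B : Set α}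
    {C : Set (α × β)} (hC : MeasurableSet C) {c : ℝ≥0∞}
    (h : ∀ x ∈ B, c ≤ ν (Prod.mk x ⁻¹' C)) : c * μ B ≤ μ.prod ν C :=
  calc c * μ B = ∫⁻ _ in B, c ∂μ := by rw [setLIntegral_const, mul_comm]
    _ ≤ ∫⁻ x in B, ν (Prod.mk x ⁻¹' C) ∂μ := setLIntegral_mono (measurable_measure_prodMk_left hC) h
    _ ≤ ∫⁻ x, ν (Prod.mk x ⁻¹' C) ∂μ := setLIntegral_le_lintegral _ _
    _ = μ.prod ν C := (Measure.prod_apply hC).symm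

open Classical in
theorem card_mul_measure_le_of_card_filter_le {ι Ω : Type*} [Fintype ι] [MeasurableSpace Ω]
    {ν : Measure Ω} [IsProbabilityMeasure ν] {τ : ι → Ω → Ω}
    (hτ : ∀ i, MeasurePreserving (τ i) ν ν) {B : Set Ω} (hB : MeasurableSet B) {M : ℕ}
    (hM : ∀ ω, #{i | τ i ω ∈ B} ≤ M) : Fintype.card ι * ν B ≤ M :=
  calc Fintype.card ι * ν B = ∑ i, ν (τ i ⁻¹' B) := by
        simp [fun i => (hτ i).measure_preimage hB.nullMeasurableSet]
    _ = ∫⁻ ω, ∑ i, (τ i ⁻¹' B).indicator 1 ω ∂ν := by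
        rw [lintegral_finsetSum _ fun i _ => measurable_one.indicator ((hτ i).measurable hB)]
        exact sum_congr rfl fun i _ => (lintegral_indicator_one ((hτ i).measurable hB)).symm
    _ = ∫⁻ ω, (#{i | τ i ω ∈ B} : ℝ≥0∞) ∂ν := by
        congr 1 with ω
        simp only [card_filter, Nat.cast_sum, Nat.cast_ite, Nat.cast_one, Nat.cast_zero,
          Set.indicator_apply, Set.mem_preimage, Pi.one_apply]
    _ ≤ ∫⁻ _, (M : ℝ≥0∞) ∂ν := lintegral_mono fun ω => Nat.cast_le.2 (hM ω)
    _ = M := by simp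

variable {X : Type*} {m : ℕ}

def swapSamples (σ : Fin m → Bool) (q : (Fin m → X) × (Fin m → X)) :
    (Fin m → X) × (Fin m → X) :=
  (fun j => if σ j then q.2 j else q.1 j, fun j => if σ j then q.1 j else q.2 j)

theorem swapSamples_fst_apply (σ : Fin m → Bool) (q : (Fin m → X) × (Fin m → X)) (j : Fin m) :
    (swapSamples σ q).1 j = Sum.elim q.1 q.2 (if σ j then .inr j else .inl j) := by
  simp only [swapSamples]; split_ifs <;> rfl

theorem swapSamples_snd_apply (σ : Fin m → Bool) (q : (Fin m → X) × (Fin m → X)) (j : Fin m) :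
    (swapSamples σ q).2 j = Sum.elim q.1 q.2 (if σ j then .inl j else .inr j) := by
  simp only [swapSamples]; split_ifs <;> rfl

theorem measurePreserving_swapSamples [MeasurableSpace X] (μ : Measure X) [SigmaFinite μ]
    (σ : Fin m → Bool) :
    MeasurePreserving (swapSamples σ)
      ((Measure.pi fun _ : Fin m => μ).prod (Measure.pi fun _ : Fin m => μ))
      ((Measure.pi fun _ : Fin m => μ).prod (Measure.pi fun _ : Fin m => μ)) := by
  have he := measurePreserving_arrowProdEquivProdArrow X X (Fin m) (fun _ => μ) (fun _ => μ)
  have h_swap : MeasurePreserving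
      (fun (p : Fin m → X × X) j => (if σ j then Prod.swap else id) (p j))
      (Measure.pi fun _ => μ.prod μ) (Measure.pi fun _ => μ.prod μ) :=
    measurePreserving_pi _ _ fun j => by
      split
      · exact Measure.measurePreserving_swap
      · exact MeasurePreserving.id _
  convert he.comp (h_swap.comp he.symm) using 1
  ext q j <;> simp [swapSamples, MeasurableEquiv.arrowProdEquivProdArrow,
    Equiv.arrowProdEquivProdArrow] <;> split <;> rfl

open Classical in
theorem SetFamilyVCDimLE.card_swapSamples_mem_le {𝒜 : Set (Set X)} {d : ℕ}
    (hVC : SetFamilyVCDimLE 𝒜 d) (k : ℕ) (q : (Fin m → X) × (Fin m → X)) :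
    #{σ | swapSamples σ q ∈
        ⋃ A ∈ 𝒜, {xs : Fin m → X | ∀ j, xs j ∉ A} ×ˢ {ys | k ≤ hitCount A ys}} ≤
      (∑ i ∈ Iic d, (2 * m).choose i) * 2 ^ (m - k) := by
  set pt := Sum.elim q.1 q.2
  set 𝒯 : Finset (Finset (Fin m ⊕ Fin m)) := {t | ∃ A ∈ 𝒜, sampleTrace pt A = t}
  have h_sub : ({σ | swapSamples σ q ∈
        ⋃ A ∈ 𝒜, {xs : Fin m → X | ∀ j, xs j ∉ A} ×ˢ {ys | k ≤ hitCount A ys}} : Finset _) ⊆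
      𝒯.biUnion fun t => {σ : Fin m → Bool | (∀ j, (if σ j then .inr j else .inl j) ∉ t) ∧
        k ≤ #{j | (if σ j then .inl j else .inr j) ∈ t}} := by
    intro σ hσ
    simp only [mem_filter, mem_univ, true_and, Set.mem_iUnion₂, Set.mem_prod,
      Set.mem_ofPred_eq] at hσ
    obtain ⟨A, hA, h_miss, h_hit⟩ := hσ
    simp only [mem_biUnion, mem_filter, mem_univ, true_and, 𝒯]
    refine ⟨_, ⟨A, hA, rfl⟩, fun j => ?_, ?_⟩
    · simpa [swapSamples_fst_apply, pt] using h_miss j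
    · simpa [hitCount, swapSamples_snd_apply, pt] using h_hit
  have h_traces : #𝒯 ≤ ∑ i ∈ Iic d, (2 * m).choose i := by
    simpa [two_mul] using hVC.card_traces_le pt
  calc _ ≤ ∑ t ∈ 𝒯, 2 ^ (m - k) :=
        (card_le_card h_sub).trans (card_biUnion_le.trans (sum_le_sum fun t _ =>
          card_filter_swap_le t k))
    _ ≤ _ := by rw [sum_const, smul_eq_mul]; gcongr

end Symmetrization

theorem sum_choose_le_div_pow_mul_exp {n d : ℕ} (hd : 0 < d) (hdn : d ≤ n) :
    ((∑ i ∈ Iic d, n.choose i : ℕ) : ℝ) ≤ ((n : ℝ) / d) ^ d * Real.exp d := by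
  have hn : (0 : ℝ) < n := by exact_mod_cast hd.trans_le hdn
  set x : ℝ := d / n
  have hx0 : 0 < x := by positivity
  have hx1 : x ≤ 1 := div_le_one_of_le₀ (by exact_mod_cast hdn) hn.le
  have h_binom : ((∑ i ∈ Iic d, n.choose i : ℕ) : ℝ) * x ^ d ≤ (x + 1) ^ n :=
    calc ((∑ i ∈ Iic d, n.choose i : ℕ) : ℝ) * x ^ d ≤ ∑ i ∈ Iic d, x ^ i * n.choose i := by
          push_cast
          rw [sum_mul]
          exact sum_le_sum fun i hi => by
            rw [mul_comm]
            exact mul_le_mul_of_nonneg_right (pow_le_pow_of_le_one hx0.le hx1 (mem_Iic.1 hi))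
              (by positivity)
      _ ≤ ∑ i ∈ range (n + 1), x ^ i * n.choose i :=
          sum_le_sum_of_subset_of_nonneg (fun i hi => by simp at hi ⊢; omega)
            fun _ _ _ => by positivity
      _ = (x + 1) ^ n := by rw [add_pow]; simp
  have h_exp : (x + 1) ^ n ≤ Real.exp d :=
    calc (x + 1) ^ n ≤ Real.exp x ^ n := by gcongr; exact Real.add_one_le_exp x
      _ = Real.exp d := by rw [← Real.exp_nat_mul]; congr 1; simp only [x]; field_simp
  have : ((n : ℝ) / d) ^ d = (x ^ d)⁻¹ := by rw [← inv_pow, inv_div]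
  rw [this, ← div_eq_inv_mul, le_div_iff₀ (by positivity)]
  exact h_binom.trans h_exp

theorem log_sum_choose_le {n d : ℕ} (hd : 0 < d) (hdn : d ≤ n) :
    Real.log (∑ i ∈ Iic d, n.choose i : ℕ) ≤ n / 2 ^ 15 + 15 * Real.log 2 * d := by
  have hd' : (0 : ℝ) < d := by exact_mod_cast hd
  have hn : (0 : ℝ) < n := by exact_mod_cast hd.trans_le hdn
  have h_pos : (0 : ℝ) < (∑ i ∈ Iic d, n.choose i : ℕ) := by
    exact_mod_cast sum_pos' (fun _ _ => Nat.zero_le _) ⟨0, by simp⟩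
  -- the tangent line of `log` at `2 ^ 15`
  have h_tangent : Real.log (n / d) ≤ n / d / 2 ^ 15 - 1 + 15 * Real.log 2 := by
    have := Real.log_le_sub_one_of_pos (show 0 < (n : ℝ) / d / 2 ^ 15 by positivity)
    rw [Real.log_div (by positivity) (by positivity), Real.log_pow] at this
    push_cast at this
    linarith
  calc Real.log (∑ i ∈ Iic d, n.choose i : ℕ)
      ≤ Real.log (((n : ℝ) / d) ^ d * Real.exp d) :=
        Real.log_le_log h_pos (sum_choose_le_div_pow_mul_exp hd hdn)
    _ = d * Real.log (n / d) + d := by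
        rw [Real.log_mul (by positivity) (by positivity), Real.log_pow, Real.log_exp]
    _ ≤ d * (n / d / 2 ^ 15 - 1 + 15 * Real.log 2) + d := by gcongr
    _ = n / 2 ^ 15 + 15 * Real.log 2 * d := by field_simp; ring

theorem two_mul_sum_choose_div_two_pow_le {d m : ℕ} (hd : 0 < d) {δ : ℝ} (hδ0 : 0 < δ)
    (hδ1 : δ < 1) (hm : 10000 * (d + Real.log (1 / δ)) ≤ m) :
    2 * (∑ i ∈ Iic d, (2 * m).choose i : ℕ) / (2 : ℝ) ^ (m / 32 + 1) ≤ δ := by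
  set N := ∑ i ∈ Iic d, (2 * m).choose i
  set L := Real.log (1 / δ)
  have hL : 0 < L := Real.log_pos (one_lt_one_div hδ0 hδ1)
  have hd' : (1 : ℝ) ≤ d := by exact_mod_cast hd
  have hdm : d ≤ 2 * m := by
    have : (d : ℝ) ≤ m := by linarith
    exact_mod_cast this.trans (by linarith : (m : ℝ) ≤ 2 * m)
  have h_logN : Real.log N ≤ 2 * m / 2 ^ 15 + 15 * Real.log 2 * d := by
    have h := log_sum_choose_le (n := 2 * m) hd hdm
    rwa [Nat.cast_mul, Nat.cast_ofNat] at h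
  have hk : (m : ℝ) / 32 ≤ (m / 32 + 1 : ℕ) := by
    have : m < 32 * (m / 32 + 1) := by omega
    rw [div_le_iff₀ (by norm_num), mul_comm]
    exact_mod_cast this.le
  have h_log2 := Real.log_two_gt_d9
  have h_exponent : Real.log 2 + Real.log N + L ≤ (m / 32 + 1 : ℕ) * Real.log 2 := by
    nlinarith
  have hN : (0 : ℝ) < N := by exact_mod_cast sum_pos' (fun _ _ => Nat.zero_le _) ⟨0, by simp⟩
  rw [div_le_iff₀ (by positivity), ← Real.log_le_log_iff (by positivity) (by positivity),
    Real.log_mul (by norm_num) hN.ne', Real.log_mul hδ0.ne' (by positivity), Real.log_pow]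
  have : Real.log δ = -L := by simp [L, Real.log_inv]
  linarith

section EpsNet

variable {X : Type*} [MeasurableSpace X] {m : ℕ}

theorem measurableSet_forall_notMem {A : Set X} (hA : MeasurableSet A) :
    MeasurableSet {xs : Fin m → X | ∀ j, xs j ∉ A} := by
  simp only [Set.ofPred_forall]
  exact .iInter fun j => hA.compl.preimage (measurable_pi_apply j)

theorem pi_biUnion_forall_notMem_le (μ : Measure X) [IsProbabilityMeasure μ]
    {𝒜 : Set (Set X)} (hc : 𝒜.Countable) (h_meas : ∀ A ∈ 𝒜, MeasurableSet A) {d : ℕ}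
    (hVC : SetFamilyVCDimLE 𝒜 d) {k : ℕ} (hk : k ≤ m)
    (h_hit : ∀ A ∈ 𝒜, 1 / 2 ≤ Measure.pi (fun _ : Fin m => μ) {ys | k ≤ hitCount A ys}) :
    Measure.pi (fun _ : Fin m => μ) (⋃ A ∈ 𝒜, {xs | ∀ j, xs j ∉ A}) ≤
      2 * (∑ i ∈ Iic d, (2 * m).choose i : ℕ) / 2 ^ k := by
  set P := Measure.pi fun _ : Fin m => μ
  set N := ∑ i ∈ Iic d, (2 * m).choose i
  set B := ⋃ A ∈ 𝒜, {xs : Fin m → X | ∀ j, xs j ∉ A}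
  set B' := ⋃ A ∈ 𝒜, {xs : Fin m → X | ∀ j, xs j ∉ A} ×ˢ {ys : Fin m → X | k ≤ hitCount A ys}
  have hB' : MeasurableSet B' := .biUnion hc fun A hA =>
    (measurableSet_forall_notMem (h_meas A hA)).prod
      (measurable_hitCount (h_meas A hA) measurableSet_Ici)
  have h_double : 2⁻¹ * P B ≤ P.prod P B' :=
    mul_measure_le_prod_of_le_measure_slice P P hB' fun xs hxs => by
      obtain ⟨A, hA, h_miss⟩ := Set.mem_iUnion₂.1 hxs
      exact (one_div (2 : ℝ≥0∞) ▸ h_hit A hA).trans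
        (measure_mono fun ys hys => Set.mem_iUnion₂.2 ⟨A, hA, h_miss, hys⟩)
  have h_swap : 2 ^ m * P.prod P B' ≤ N * 2 ^ (m - k) := by
    have := card_mul_measure_le_of_card_filter_le (measurePreserving_swapSamples μ) hB'
      (hVC.card_swapSamples_mem_le k)
    simp only [Fintype.card_fun, Fintype.card_bool, Fintype.card_fin] at this
    exact_mod_cast this
  have h_pair : P.prod P B' * 2 ^ k ≤ N := by
    rw [← ENNReal.mul_le_mul_iff_right (a := 2 ^ (m - k)) (by simp) (by simp)]
    calc 2 ^ (m - k) * (P.prod P B' * 2 ^ k) = 2 ^ m * P.prod P B' := by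
          rw [mul_comm (P.prod P B'), ← mul_assoc, ← pow_add, Nat.sub_add_cancel hk]
      _ ≤ N * 2 ^ (m - k) := h_swap
      _ = 2 ^ (m - k) * N := mul_comm _ _
  calc P B = 2 * (2⁻¹ * P B) := by
        rw [← mul_assoc, ENNReal.mul_inv_cancel two_ne_zero ENNReal.ofNat_ne_top, one_mul]
    _ ≤ 2 * (N / 2 ^ k) := by
        gcongr
        exact h_double.trans ((ENNReal.le_div_iff_mul_le (by simp) (by simp)).2 h_pair)
    _ = 2 * N / 2 ^ k := by rw [mul_div_assoc]

theorem one_sub_ofReal_le_pi_forall_exists_mem (μ : Measure X) [IsProbabilityMeasure μ]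
    {𝒜 : Set (Set X)} (hc : 𝒜.Countable) (h_meas : ∀ A ∈ 𝒜, MeasurableSet A) {d : ℕ}
    (hVC : SetFamilyVCDimLE 𝒜 d) (hd : 0 < d) {δ : ℝ} (hδ0 : 0 < δ) (hδ1 : δ < 1)
    (hm : 10000 * (d + Real.log (1 / δ)) ≤ m) :
    1 - ENNReal.ofReal δ ≤
      Measure.pi (fun _ : Fin m => μ) {xs | ∀ A ∈ 𝒜, 1 / 16 < μ A → ∃ j, xs j ∈ A} := by
  set 𝒜' := {A ∈ 𝒜 | 1 / 16 < μ A}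
  have hm' : 512 ≤ m := by
    have hd' : (1 : ℝ) ≤ d := by exact_mod_cast hd
    have hL : 0 < Real.log (1 / δ) := Real.log_pos (one_lt_one_div hδ0 hδ1)
    exact_mod_cast (by linarith : (512 : ℝ) ≤ m)
  have h_bad := pi_biUnion_forall_notMem_le μ (hc.mono (Set.sep_subset _ _))
    (fun A hA => h_meas A hA.1) (hVC.mono (Set.sep_subset _ _)) (by omega : m / 32 + 1 ≤ m)
    fun A hA => half_le_pi_hitCount μ (h_meas A hA.1) hA.2 hm'
  have h_num : 2 * ((∑ i ∈ Iic d, (2 * m).choose i : ℕ) : ℝ≥0∞) / 2 ^ (m / 32 + 1) ≤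
      ENNReal.ofReal δ := by
    set N := ∑ i ∈ Iic d, (2 * m).choose i
    have h := ENNReal.ofReal_le_ofReal (two_mul_sum_choose_div_two_pow_le hd hδ0 hδ1 hm)
    rwa [ENNReal.ofReal_div_of_pos (by positivity), ENNReal.ofReal_mul zero_le_two,
      ENNReal.ofReal_natCast, ENNReal.ofReal_pow zero_le_two, ENNReal.ofReal_ofNat] at h
  have h_good : {xs : Fin m → X | ∀ A ∈ 𝒜, 1 / 16 < μ A → ∃ j, xs j ∈ A} =
      (⋃ A ∈ 𝒜', {xs : Fin m → X | ∀ j, xs j ∉ A})ᶜ := by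
    ext xs
    simp [𝒜']
  rw [h_good, prob_compl_eq_one_sub (.biUnion (hc.mono (Set.sep_subset _ _))
    fun A hA => measurableSet_forall_notMem (h_meas A hA.1))]
  exact tsub_le_tsub_left (h_bad.trans h_num) 1

end EpsNet

/-- Lemma 1 of the paper: there is a universal constant `C > 0` such that for
every countable class `H` of measurable `±1`-valued functions of VC dimension at most `d`,
probability measure `D`, ground truth `g ∈ H`, clip parameter `ε ∈ (0,1)`, `i ≥ 2`, measurable
`±1`-valued `h₁,…,h_{i-1}` with `D(Maj(h₁,…,h_{i-1}) ≠ g) > 0`, and every `δ ∈ (0,1)` and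
`m ≥ C (d + log(1/δ))`: with probability at least `1 - δ` over an i.i.d. sample of size `m`
from `D` conditioned on `{Maj(h₁,…,h_{i-1}) ≠ g}`, every `h ∈ H` consistent with `g` on the
sample satisfies `D(Maj(h₁,…,h_{i-1}) ≠ g ∧ h ≠ g) ≤ (1/16) D(Maj(h₁,…,h_{i-1}) ≠ g)`. -/
theorem stmt7 :
    ∃ C : ℝ, 0 < C ∧
      ∀ (X : Type) (_ : MeasurableSpace X) (H : Set (X → ℤ)) (d : ℕ),
        H.Countable → (∀ h ∈ H, Measurable h) → (∀ h ∈ H, ∀ x, h x = 1 ∨ h x = -1) →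
        VCDimLE H d →
        ∀ (D : Measure X), IsProbabilityMeasure D →
        ∀ g ∈ H, ∀ ε ∈ Set.Ioo (0 : ℝ) 1, ∀ i : ℕ, 2 ≤ i →
        ∀ h : ℕ → X → ℤ, (∀ n, Measurable (h n)) → (∀ n x, h n x = 1 ∨ h n x = -1) →
        0 < D {x | MajSeq ε h (i - 1) x ≠ g x} →
        ∀ δ ∈ Set.Ioo (0 : ℝ) 1, ∀ m : ℕ, C * ((d : ℝ) + Real.log (1 / δ)) ≤ (m : ℝ) →
        1 - ENNReal.ofReal δ ≤
          (Measure.pi fun _ : Fin m => D[|{x | MajSeq ε h (i - 1) x ≠ g x}])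
            {xs | ∀ hf ∈ H, (∀ j : Fin m, hf (xs j) = g (xs j)) →
              D {x | MajSeq ε h (i - 1) x ≠ g x ∧ hf x ≠ g x} ≤
                (1 / 16 : ℝ≥0∞) * D {x | MajSeq ε h (i - 1) x ≠ g x}} := by
  refine ⟨10000, by norm_num, ?_⟩
  intro X _ H d hH_count hH_meas hH_pm hVC D _ g hg ε _ i _ h _ _ hE δ hδ m hm
  set E := {x | MajSeq ε h (i - 1) x ≠ g x}
  have : IsProbabilityMeasure D[|E] := cond_isProbabilityMeasure hE.ne'
  have h_disagree := hVC.setFamilyVCDimLE_disagreementSets hH_pm (hH_pm g hg)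
  have h_meas : ∀ f ∈ H, MeasurableSet {x | f x ≠ g x} := fun f hf =>
    (measurableSet_eq_fun (hH_meas f hf) (hH_meas g hg)).compl
  have h_cond : ∀ f ∈ H, D {x | MajSeq ε h (i - 1) x ≠ g x ∧ f x ≠ g x} =
      D E * D[|E] {x | f x ≠ g x} := fun f hf => by
    rw [cond_apply' (h_meas f hf), ← mul_assoc,
      ENNReal.mul_inv_cancel hE.ne' (measure_ne_top _ _), one_mul]
    rfl
  rcases Nat.eq_zero_or_pos d with rfl | hd
  · have h_all : ∀ f ∈ H, {x | f x ≠ g x} = ∅ := fun f hf =>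
      (h_disagree.eq_of_zero ⟨f, hf, rfl⟩ ⟨g, hg, rfl⟩).trans (by simp)
    refine (tsub_le_self.trans_eq measure_univ.symm).trans (measure_mono fun xs _ f hf _ => ?_)
    simp [h_cond f hf, h_all f hf]
  refine (one_sub_ofReal_le_pi_forall_exists_mem D[|E] (hH_count.image _)
    (Set.forall_mem_image.2 h_meas)
    h_disagree hd hδ.1 hδ.2 hm).trans (measure_mono fun xs hxs f hf h_agree => ?_)
  rw [h_cond f hf, mul_comm]
  gcongr
  by_contra h_big
  obtain ⟨j, hj⟩ := hxs _ ⟨f, hf, rfl⟩ (not_le.1 h_big)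
  exact hj (h_agree j)
end

section
/- Let X be a measurable space, D a probability measure on X, g : X → {−1,+1} measurable, ε ∈ (0,1), i ≥ 2, h₁,…,h_{i−1} : X → {−1,+1} measurable, and v an odd integer with 1 ≤ v ≤ B_ε. Let h' : X → {−1,+1} be defined by h'(x) := −Maj(h₁,…,h_{i−1})(x) if |Vote(h₁,…,h_{i−1})(x)| = v and h'(x) := Maj(h₁,…,h_{i−1})(x) otherwise. Then: (1) {x : Vote_g(h₁,…,h_{i−1})(x) = −v} ⊆ {x : h'(x) ≠ g(x)} ⊆ {x : Maj(h₁,…,h_{i−1})(x) ≠ g(x)} ∪ {x : Vote_g(h₁,…,h_{i−1})(x) = −v}; (2) consequently, if D({x : h'(x) ≠ g(x)}) > 0 then D|_{h' ≠ g}({x : Vote_g(h₁,…,h_{i−1})(x) = −v}) ≥ D({Vote_g(h₁,…,h_{i−1}) = −v}) / ( D({Maj(h₁,…,h_{i−1}) ≠ g}) + D({Vote_g(h₁,…,h_{i−1}) = −v}) ); and (3) if moreover D({Vote_g(h₁,…,h_{i−1}) = −v}) ≥ (1/B_ε⁴) · D({Maj(h₁,…,h_{i−1}) ≠ g}), then D|_{h'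 ≠ g}({x : Vote_g(h₁,…,h_{i−1})(x) = −v}) ≥ 1/(2·B_ε⁴). -/
open MeasureTheory ProbabilityTheory
open scoped ENNReal

/-- The function `h'` obtained from `Maj(h₁,…,h_n)` by flipping its prediction on the region
`{x : |Vote(h₁,…,h_n)(x)| = v}`. -/
noncomputable def hPrime (ε : ℝ) {X : Type*} (h : ℕ → X → ℤ) (n : ℕ) (v : ℤ) (x : X) : ℤ :=
  if |VoteSeq ε h n x| = v then -MajSeq ε h n x else MajSeq ε h n x

/-! Because every `hₙ` and `g` take values `±1` and clipping is odd, `Vote_g = -g · Vote`.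
So on `{Vote_g = -v}` the vote has absolute value `v` and the sign of `g`: there `Maj` is correct
and `h'` flips it, hence errs. Conversely `h'` errs only where `Maj` does or where it flipped a
correct `Maj`, which is exactly `{Vote_g = -v}`. With `S ⊆ A := {h' ≠ g}` and
`D A ≤ D {Maj ≠ g} + D S`, the conditional probability `D S / D A` is bounded from below. -/

lemma clip_neg {ε : ℝ} (hB : 0 ≤ Bval ε) (z : ℤ) : clip ε (-z) = -clip ε z := by
  simp only [clip, min_def, max_def]
  split_ifs <;> omega

lemma ite_eq_neg_mul_of_sign {a b : ℤ} (ha : a = 1 ∨ a = -1) (hb : b = 1 ∨ b = -1) :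
    (if a = b then -1 else 1) = -b * a := by
  rcases ha with rfl | rfl <;> rcases hb with rfl | rfl <;> rfl

section Vote

variable {ε : ℝ} {X : Type*} {h : ℕ → X → ℤ} {g : X → ℤ} {v : ℤ}

lemma voteGSeq_eq_neg_mul_voteSeq (hB : 0 ≤ Bval ε) (hg : ∀ x, g x = 1 ∨ g x = -1)
    (hpm : ∀ n x, h n x = 1 ∨ h n x = -1) {n : ℕ} (hn : 1 ≤ n) (x : X) :
    VoteGSeq ε h g n x = -g x * VoteSeq ε h n x := by
  induction n, hn using Nat.le_induction with
  | base => exact ite_eq_neg_mul_of_sign (hpm 1 x) (hg x)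
  | succ k hk ih =>
    obtain ⟨k, rfl⟩ := Nat.exists_eq_add_of_le' hk
    simp only [VoteGSeq, VoteSeq, ih, ite_eq_neg_mul_of_sign (hpm (k + 2) x) (hg x)]
    rw [show -g x * VoteSeq ε h (k + 1) x + 2 * (-g x * h (k + 2) x) =
      -g x * (VoteSeq ε h (k + 1) x + 2 * h (k + 2) x) by ring]
    rcases hg x with hgx | hgx <;> simp only [hgx, neg_neg, one_mul, neg_one_mul, clip_neg hB]

lemma setOf_voteGSeq_eq_neg_subset_hPrime_ne (hB : 0 ≤ Bval ε) (hg : ∀ x, g x = 1 ∨ g x = -1)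
    (hpm : ∀ n x, h n x = 1 ∨ h n x = -1) {n : ℕ} (hn : 1 ≤ n) (hv : 1 ≤ v) :
    {x | VoteGSeq ε h g n x = -v} ⊆ {x | hPrime ε h n v x ≠ g x} := by
  intro x hx
  simp only [Set.mem_ofPred_eq, voteGSeq_eq_neg_mul_voteSeq hB hg hpm hn] at hx
  simp only [Set.mem_ofPred_eq, hPrime, MajSeq]
  rcases hg x with hgx | hgx <;> rw [hgx] at hx ⊢
  · rw [if_pos (by rw [abs_of_nonneg] <;> omega), if_pos (by omega)]
    omega
  · rw [if_pos (by rw [abs_of_neg] <;> omega), if_neg (by omega)]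
    omega

lemma setOf_hPrime_ne_subset (hB : 0 ≤ Bval ε) (hg : ∀ x, g x = 1 ∨ g x = -1)
    (hpm : ∀ n x, h n x = 1 ∨ h n x = -1) {n : ℕ} (hn : 1 ≤ n) :
    {x | hPrime ε h n v x ≠ g x} ⊆
      {x | MajSeq ε h n x ≠ g x} ∪ {x | VoteGSeq ε h g n x = -v} := by
  intro x hx
  by_cases hM : MajSeq ε h n x = g x
  · right
    have habs : |VoteSeq ε h n x| = v := by
      by_contra hne
      exact hx (by rw [hPrime, if_neg hne, hM])
    simp only [Set.mem_ofPred_eq, voteGSeq_eq_neg_mul_voteSeq hB hg hpm hn, ← hM, MajSeq]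
    split_ifs with hW
    · rw [abs_of_nonneg hW] at habs
      omega
    · rw [abs_of_neg (not_le.mp hW)] at habs
      omega
  · exact Or.inl hM

end Vote

lemma div_add_le_cond_apply {Ω : Type*} [MeasurableSpace Ω] (μ : Measure Ω) {s t u : Set Ω}
    (hst : s ⊆ t) (htu : t ⊆ u ∪ s) : μ s / (μ u + μ s) ≤ μ[s | t] :=
  calc μ s / (μ u + μ s) ≤ μ s / μ t :=
        ENNReal.div_le_div_left ((measure_mono htu).trans (measure_union_le u s)) _
    _ = (μ t)⁻¹ * μ (s ∩ t) := by
        rw [Set.inter_eq_self_of_subset_left hst, ENNReal.div_eq_inv_mul]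
    _ ≤ μ[s | t] := mul_le_mul_right (Measure.le_restrict_apply t s) _

lemma one_div_two_mul_le_div_add {a b c : ℝ≥0∞} (hc : 1 ≤ c) (hc_top : c ≠ ∞)
    (hb : b ≠ ∞) (hab : 0 < a + b) (h : 1 / c * a ≤ b) : 1 / (2 * c) ≤ b / (a + b) := by
  have hc0 : c ≠ 0 := (zero_lt_one.trans_le hc).ne'
  have ha : a ≤ c * b := by
    rwa [one_div, ← ENNReal.div_eq_inv_mul,
      ENNReal.div_le_iff_le_mul (Or.inl hc0) (Or.inl hc_top), mul_comm] at h
  have hab_le : a + b ≤ 2 * c * b :=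
    calc a + b ≤ c * b + c * b := add_le_add ha (le_mul_of_one_le_left' hc)
      _ = 2 * c * b := by ring
  have h2c : 2 * c ≠ 0 := mul_ne_zero two_ne_zero hc0
  have h2c_top : 2 * c ≠ ∞ := ENNReal.mul_ne_top ENNReal.ofNat_ne_top hc_top
  have hab_top : a + b ≠ ∞ :=
    ENNReal.add_ne_top.mpr ⟨ne_top_of_le_ne_top (ENNReal.mul_ne_top hc_top hb) ha, hb⟩
  rw [ENNReal.le_div_iff_mul_le (Or.inl hab.ne') (Or.inl hab_top)]
  calc 1 / (2 * c) * (a + b) ≤ 1 / (2 * c) * (2 * c * b) := mul_le_mul_right hab_le _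
    _ = b := by rw [← mul_assoc, one_div, ENNReal.inv_mul_cancel h2c h2c_top, one_mul]

/-- the set inclusions and success-probability bound from the proof of
Lemma 2: with `h'` flipping `Maj(h₁,…,h_{i-1})` on `{|Vote(h₁,…,h_{i-1})| = v}`:
(1) `{Vote_g = -v} ⊆ {h' ≠ g} ⊆ {Maj ≠ g} ∪ {Vote_g = -v}`;
(2) if `D(h' ≠ g) > 0` then `D|_{h' ≠ g}(Vote_g = -v) ≥ D(Vote_g = -v)/(D(Maj ≠ g) + D(Vote_g = -v))`;
(3) if moreover `D(Vote_g = -v) ≥ (1/B_ε⁴) D(Maj ≠ g)`, then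
`D|_{h' ≠ g}(Vote_g = -v) ≥ 1/(2 B_ε⁴)`. -/
theorem stmt9 (X : Type) (_ : MeasurableSpace X) (D : Measure X)
    (hD : IsProbabilityMeasure D) (g : X → ℤ)
    (hg : ∀ x, g x = 1 ∨ g x = -1) (ε : ℝ)
    (i : ℕ) (hi : 2 ≤ i) (h : ℕ → X → ℤ)
    (hpm : ∀ n x, h n x = 1 ∨ h n x = -1)
    (v : ℤ) (hv1 : 1 ≤ v) (hvB : v ≤ Bval ε) :
    ({x | VoteGSeq ε h g (i - 1) x = -v} ⊆ {x | hPrime ε h (i - 1) v x ≠ g x} ∧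
      {x | hPrime ε h (i - 1) v x ≠ g x} ⊆
        {x | MajSeq ε h (i - 1) x ≠ g x} ∪ {x | VoteGSeq ε h g (i - 1) x = -v}) ∧
    (0 < D {x | hPrime ε h (i - 1) v x ≠ g x} →
      D {x | VoteGSeq ε h g (i - 1) x = -v} /
          (D {x | MajSeq ε h (i - 1) x ≠ g x} + D {x | VoteGSeq ε h g (i - 1) x = -v}) ≤
        (D[|{x | hPrime ε h (i - 1) v x ≠ g x}]) {x | VoteGSeq ε h g (i - 1) x = -v}) ∧
    (0 < D {x | hPrime ε h (i - 1) v x ≠ g x} →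
      (1 / ((Bval ε).toNat : ℝ≥0∞) ^ 4) * D {x | MajSeq ε h (i - 1) x ≠ g x} ≤
        D {x | VoteGSeq ε h g (i - 1) x = -v} →
      1 / (2 * ((Bval ε).toNat : ℝ≥0∞) ^ 4) ≤
        (D[|{x | hPrime ε h (i - 1) v x ≠ g x}]) {x | VoteGSeq ε h g (i - 1) x = -v}) := by
  have hn : 1 ≤ i - 1 := by omega
  have hB : 0 ≤ Bval ε := by omega
  have hsub₁ := setOf_voteGSeq_eq_neg_subset_hPrime_ne hB hg hpm hn hv1
  have hsub₂ := setOf_hPrime_ne_subset (v := v) hB hg hpm hn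
  have hcond := div_add_le_cond_apply D hsub₁ hsub₂
  refine ⟨⟨hsub₁, hsub₂⟩, fun _ ↦ hcond, fun hpos hle ↦ le_trans ?_ hcond⟩
  have hB_pow : (1 : ℝ≥0∞) ≤ ((Bval ε).toNat : ℝ≥0∞) ^ 4 :=
    one_le_pow₀ (by exact_mod_cast (by omega : 1 ≤ (Bval ε).toNat))
  exact one_div_two_mul_le_div_add hB_pow (by simp) (measure_ne_top D _)
    (hpos.trans_le ((measure_mono hsub₂).trans (measure_union_le _ _))) hle
end
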